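/- arXiv:1907.08203 — 11 statements merged into one kernel-verified Lean document; each statement's English description precedes it below -/
import Mathlib

section
/- Let X be a nonempty set and (X, τ₁, …, τₙ) an n-topological space. Then the cardinality of KFₙ equals twice the cardinality of KFₙ⁰, i.e. #KFₙ = 2·#KFₙ⁰. -/
open Set

noncomputable section

/-- The closure operator of the topology `t`, as an element of the monoid
`Function.End (Set X)` of self-maps of the power set of `X` under composition. -/
def clOp {X : Type*} (t : TopologicalSpace X) : Function.End (Set X) := fun A => @closure X t A

/-- The interior operator of the topology `t`. -/
def intOp {X : Type*} (t : TopologicalSpace X) : Function.End (Set X) := fun A => @interior X t A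

/-- The frontier (topological boundary) operator of the topology `t`. -/
def frOp {X : Type*} (t : TopologicalSpace X) : Function.End (Set X) := fun A => @frontier X t A

/-- The set-complement operator. -/
def complOp {X : Type*} : Function.End (Set X) := fun A => Aᶜ

/-- An `n`-topological space: the topologies `τ 0 ⊇ τ 1 ⊇ ⋯ ⊇ τ (n-1)` are linearly
ordered by inclusion, with `τ 0` the finest: every `τ j`-open set is `τ i`-open
whenever `i ≤ j`. -/
def OrderedTop {X : Type*} {n : ℕ} (τ : Fin n → TopologicalSpace X) : Prop :=
  ∀ i j : Fin n, i ≤ j → ∀ U : Set X, (τ j).IsOpen U → (τ i).IsOpen U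

/-- Saturation: every nonempty `τ x`-open set has nonempty `τ y`-interior. -/
def SaturatedTop {X : Type*} {n : ℕ} (τ : Fin n → TopologicalSpace X) : Prop :=
  ∀ x y : Fin n, ∀ U : Set X, (τ x).IsOpen U → U.Nonempty → (@interior X (τ y) U).Nonempty

/-- `KFₙ⁰`: the submonoid of `Function.End (Set X)` generated by the closure,
interior and frontier operators of the topologies `τ j`. -/
def KF0 {X : Type*} {n : ℕ} (τ : Fin n → TopologicalSpace X) : Submonoid (Function.End (Set X)) :=
  Submonoid.closure (⋃ j : Fin n, {clOp (τ j), intOp (τ j), frOp (τ j)})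

/-- `KFₙ`: the submonoid of `Function.End (Set X)` generated by the closure and
frontier operators of the topologies `τ j` together with the complement operator. -/
def KF {X : Type*} {n : ℕ} (τ : Fin n → TopologicalSpace X) : Submonoid (Function.End (Set X)) :=
  Submonoid.closure ((⋃ j : Fin n, {clOp (τ j), frOp (τ j)}) ∪ {complOp})

/-- `p(n) = (5/24)n⁴ + (37/12)n³ + (79/24)n² + (101/12)n + 2`. -/
def pQ (n : ℕ) : ℚ :=
  5/24*(n:ℚ)^4 + 37/12*(n:ℚ)^3 + 79/24*(n:ℚ)^2 + 101/12*(n:ℚ) + 2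

/-- A saturated pair of topologies: every nonempty set open in either topology has
nonempty interior with respect to both. -/
def Saturated2 {X : Type*} (t1 t2 : TopologicalSpace X) : Prop :=
  ∀ U : Set X, (t1.IsOpen U ∨ t2.IsOpen U) → U.Nonempty →
    (@interior X t1 U).Nonempty ∧ (@interior X t2 U).Nonempty

/-- `KF₂⁰`: the submonoid generated by `{k₁, i₁, f₁, k₂, i₂, f₂}`. -/
def KF20 {X : Type*} (t1 t2 : TopologicalSpace X) : Submonoid (Function.End (Set X)) :=
  Submonoid.closure {clOp t1, intOp t1, frOp t1, clOp t2, intOp t2, frOp t2}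

/-- `KF₂`: the submonoid generated by `{k₁, f₁, k₂, f₂, c}`. -/
def KF2 {X : Type*} (t1 t2 : TopologicalSpace X) : Submonoid (Function.End (Set X)) :=
  Submonoid.closure {clOp t1, frOp t1, clOp t2, frOp t2, complOp}

/-! Complementation `c` is an involution commuting past the generators as `k c = c i` and
`f c = f`, so every word in `KFₙ` can be rewritten as `g` or `c g` with `g ∈ KFₙ⁰`. These two
families are disjoint because every `g ∈ KFₙ⁰` fixes `∅`, while `c g` sends it to `X`. -/

section

variable {X : Type*}

lemma complOp_mul_complOp_mul (g : Function.End (Set X)) : complOp * (complOp * g) = g :=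
  funext fun A => compl_compl (g A)

lemma involutive_complOp_mul : Function.Involutive ((complOp : Function.End (Set X)) * ·) :=
  complOp_mul_complOp_mul

lemma intOp_eq_complOp_mul_clOp_mul_complOp (t : TopologicalSpace X) :
    intOp t = complOp * clOp t * complOp :=
  funext fun A => by
    change @interior X t A = (@closure X t Aᶜ)ᶜ
    rw [@closure_compl X t, compl_compl]

lemma clOp_mul_complOp (t : TopologicalSpace X) : clOp t * complOp = complOp * intOp t :=
  funext fun A => @closure_compl X t A

lemma frOp_mul_complOp (t : TopologicalSpace X) : frOp t * complOp = frOp t :=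
  funext fun A => @frontier_compl X t A

end

section

variable {X : Type*} {n : ℕ} (τ : Fin n → TopologicalSpace X)

lemma clOp_mem_KF0 (j : Fin n) : clOp (τ j) ∈ KF0 τ :=
  Submonoid.subset_closure (mem_iUnion.2 ⟨j, by simp⟩)

lemma intOp_mem_KF0 (j : Fin n) : intOp (τ j) ∈ KF0 τ :=
  Submonoid.subset_closure (mem_iUnion.2 ⟨j, by simp⟩)

lemma frOp_mem_KF0 (j : Fin n) : frOp (τ j) ∈ KF0 τ :=
  Submonoid.subset_closure (mem_iUnion.2 ⟨j, by simp⟩)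

lemma clOp_mem_KF (j : Fin n) : clOp (τ j) ∈ KF τ :=
  Submonoid.subset_closure (Or.inl (mem_iUnion.2 ⟨j, by simp⟩))

lemma frOp_mem_KF (j : Fin n) : frOp (τ j) ∈ KF τ :=
  Submonoid.subset_closure (Or.inl (mem_iUnion.2 ⟨j, by simp⟩))

lemma complOp_mem_KF : complOp ∈ KF τ :=
  Submonoid.subset_closure (Or.inr rfl)

lemma KF0_le_KF : KF0 τ ≤ KF τ := by
  rw [KF0, Submonoid.closure_le]
  simp only [iUnion_subset_iff, insert_subset_iff, singleton_subset_iff, SetLike.mem_coe]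
  intro j
  refine ⟨clOp_mem_KF τ j, ?_, frOp_mem_KF τ j⟩
  rw [intOp_eq_complOp_mul_clOp_mul_complOp]
  exact mul_mem (mul_mem (complOp_mem_KF τ) (clOp_mem_KF τ j)) (complOp_mem_KF τ)

lemma apply_empty_of_mem_KF0 {g : Function.End (Set X)} (hg : g ∈ KF0 τ) : g ∅ = ∅ := by
  induction hg using Submonoid.closure_induction with
  | mem x hx =>
    simp only [mem_iUnion, mem_insert_iff, mem_singleton_iff] at hx
    obtain ⟨j, rfl | rfl | rfl⟩ := hx
    exacts [@closure_empty X (τ j), @interior_empty X (τ j), @frontier_empty X (τ j)]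
  | one => rfl
  | mul x y _ _ hx hy => exact (congrArg x hy).trans hx

lemma coe_KF_eq_union : (KF τ : Set (Function.End (Set X))) =
    (KF0 τ : Set (Function.End (Set X))) ∪ (complOp * ·) '' (KF0 τ : Set _) := by
  refine Subset.antisymm (fun x hx => ?_) (union_subset (KF0_le_KF τ) ?_)
  · induction hx using Submonoid.closure_induction_left with
    | one => exact Or.inl (one_mem _)
    | mul_left s hs y _ ih =>
      simp only [mem_union, mem_iUnion, mem_insert_iff, mem_singleton_iff] at hs
      obtain ⟨j, rfl | rfl⟩ | rfl := hs <;> obtain hy | ⟨g, hg, rfl⟩ := ih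
      · exact Or.inl (mul_mem (clOp_mem_KF0 τ j) hy)
      · refine Or.inr ⟨intOp (τ j) * g, mul_mem (intOp_mem_KF0 τ j) hg, ?_⟩
        beta_reduce
        rw [← mul_assoc (clOp _), clOp_mul_complOp, mul_assoc]
      · exact Or.inl (mul_mem (frOp_mem_KF0 τ j) hy)
      · rw [← mul_assoc, frOp_mul_complOp]
        exact Or.inl (mul_mem (frOp_mem_KF0 τ j) hg)
      · exact Or.inr ⟨y, hy, rfl⟩
      · rw [complOp_mul_complOp_mul]
        exact Or.inl hg
  · rintro _ ⟨g, hg, rfl⟩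
    exact mul_mem (complOp_mem_KF τ) (KF0_le_KF τ hg)

lemma disjoint_KF0_complOp_mul_KF0 [Nonempty X] :
    Disjoint (KF0 τ : Set (Function.End (Set X))) ((complOp * ·) '' (KF0 τ : Set _)) := by
  refine disjoint_left.2 fun g hg ⟨h, hh, hgh⟩ => (empty_ne_univ (α := X)) ?_
  calc (∅ : Set X) = g ∅ := (apply_empty_of_mem_KF0 τ hg).symm
    _ = (h ∅)ᶜ := (congrFun hgh ∅).symm
    _ = univ := by rw [apply_empty_of_mem_KF0 τ hh, compl_empty]

end

theorem stmt_4_general {X : Type*} [Nonempty X] {n : ℕ} (τ : Fin n → TopologicalSpace X) :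
    Cardinal.mk ↥(KF τ) = 2 * Cardinal.mk ↥(KF0 τ) := by
  change Cardinal.mk ↥(KF τ : Set (Function.End (Set X))) = _
  rw [coe_KF_eq_union, Cardinal.mk_union_of_disjoint (disjoint_KF0_complOp_mul_KF0 τ),
    Cardinal.mk_image_eq involutive_complOp_mul.injective, two_mul]
  rfl

/-- in an `n`-topological space on a nonempty set `X`,
`#KFₙ = 2·#KFₙ⁰`. -/
theorem stmt_4 {X : Type*} [Nonempty X] {n : ℕ} (τ : Fin n → TopologicalSpace X)
    (hord : OrderedTop τ) :
    Cardinal.mk ↥(KF τ) = 2 * Cardinal.mk ↥(KF0 τ) :=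
  stmt_4_general τ
end
end

section
/- Let (X, τ₁, …, τₙ) be a saturated n-topological space. Then for all 1 ≤ x, y ≤ n and every subset A ⊆ X, k_x(i_y A) = k_x(i_x A) and i_x(k_y A) = i_x(k_x A). -/
open Set

noncomputable section

open Topology

local notation "interior[" t "]" => @interior _ t

section SaturatedPair

variable {X : Type*} {t u v w : TopologicalSpace X}

/-- For `p ∈ interior[w] A` and a `u`-open `o ∋ p`, the set `o ∩ interior[w] A` is `t`-open and
nonempty, so its `v`-interior provides a point of `o ∩ interior[v] A`. -/
theorem interior_subset_closure_interior (htu : t ≤ u) (htw : t ≤ w)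
    (hsat : ∀ U, IsOpen[t] U → U.Nonempty → (interior[v] U).Nonempty) (A : Set X) :
    interior[w] A ⊆ closure[u] (interior[v] A) := by
  intro p hp
  refine (@mem_closure_iff X u _ _).2 fun o ho hpo => ?_
  have hopen : IsOpen[t] (o ∩ interior[w] A) :=
    @IsOpen.inter X t _ _ (htu _ ho) (htw _ (@isOpen_interior X w _))
  obtain ⟨q, hq⟩ := hsat _ hopen ⟨p, hpo, hp⟩
  have hqo : q ∈ o ∩ interior[w] A := @interior_subset X v _ _ hq
  have hsub : o ∩ interior[w] A ⊆ A := fun r hr => @interior_subset X w _ _ hr.2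
  exact ⟨q, hqo.1, @interior_mono X v _ _ hsub q hq⟩

theorem closure_interior_eq_of_saturated (htu : t ≤ u) (htv : t ≤ v)
    (hsat_u : ∀ U, IsOpen[t] U → U.Nonempty → (interior[u] U).Nonempty)
    (hsat_v : ∀ U, IsOpen[t] U → U.Nonempty → (interior[v] U).Nonempty) (A : Set X) :
    closure[u] (interior[v] A) = closure[u] (interior[u] A) :=
  subset_antisymm
    (@closure_minimal X u _ _ (interior_subset_closure_interior htu htv hsat_u A)
      (@isClosed_closure X u _))
    (@closure_minimal X u _ _ (interior_subset_closure_interior htu htu hsat_v A)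
      (@isClosed_closure X u _))

theorem interior_closure_eq_of_closure_interior_compl_eq {A : Set X}
    (h : closure[u] (interior[v] Aᶜ) = closure[u] (interior[u] Aᶜ)) :
    interior[u] (closure[v] A) = interior[u] (closure[u] A) := by
  rw [@closure_eq_compl_interior_compl X v, @closure_eq_compl_interior_compl X u,
    @interior_compl X u, @interior_compl X u, h]

end SaturatedPair

/-- in a saturated `n`-topological space, `kₓ(i_y A) = kₓ(iₓ A)` and
`iₓ(k_y A) = iₓ(kₓ A)` for all indices `x, y` and all `A ⊆ X`. -/
theorem stmt_5 {X : Type*} {n : ℕ} (τ : Fin n → TopologicalSpace X)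
    (hord : OrderedTop τ) (hsat : SaturatedTop τ) (x y : Fin n) (A : Set X) :
    @closure X (τ x) (@interior X (τ y) A) = @closure X (τ x) (@interior X (τ x) A) ∧
      @interior X (τ x) (@closure X (τ y) A) = @interior X (τ x) (@closure X (τ x) A) := by
  have hmono : Monotone τ := fun i j hij => TopologicalSpace.le_def.2 (hord i j hij)
  have key : ∀ B : Set X,
      closure[τ x] (interior[τ y] B) = closure[τ x] (interior[τ x] B) := fun B =>
    closure_interior_eq_of_saturated (hmono (min_le_left x y)) (hmono (min_le_right x y))
      (hsat _ x) (hsat _ y) B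
  exact ⟨key A, interior_closure_eq_of_closure_interior_compl_eq (key Aᶜ)⟩
end
end

section
/- (IF Lemma) Let (X, τ₁, …, τₙ) be a saturated n-topological space. Then for all 1 ≤ x, y, z ≤ n and every subset A ⊆ X, i_x(f_y A) = i_x(f_z A); that is, the operator i_x f_y does not depend on the index y. -/
open Set

noncomputable section

/-! A point of `iₓ(f_y A)` outside `f_z A` lies in `i_z A` or in `i_z Aᶜ`. Intersecting
`iₓ(f_y A)` with that interior gives a nonempty set open in the finer of `τ x`, `τ z`, so by
saturation it has nonempty `τ y`-interior. But a `τ y`-open set inside `f_y A` cannot lie inside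
`A` (it would lie in `i_y A`) nor inside `Aᶜ`. -/

theorem interior_frontier_inter_self {X : Type*} [TopologicalSpace X] (s : Set X) :
    interior (frontier s ∩ s) = ∅ :=
  subset_empty_iff.mp <| calc
    interior (frontier s ∩ s) = interior (frontier s) ∩ interior s := interior_inter
    _ ⊆ frontier s ∩ interior s := inter_subset_inter_left _ interior_subset
    _ = ∅ := sdiff_inter_self

theorem interior_frontier_inter_compl {X : Type*} [TopologicalSpace X] (s : Set X) :
    interior (frontier s ∩ sᶜ) = ∅ := by
  simpa only [frontier_compl] using interior_frontier_inter_self sᶜ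

section OrderedSaturated

variable {X : Type*} {n : ℕ} {τ : Fin n → TopologicalSpace X}

theorem OrderedTop.isOpen_inter (hord : OrderedTop τ) {x z : Fin n} {U V : Set X}
    (hU : (τ x).IsOpen U) (hV : (τ z).IsOpen V) : (τ (min x z)).IsOpen (U ∩ V) :=
  @IsOpen.inter X (τ (min x z)) U V (hord _ _ (min_le_left x z) U hU)
    (hord _ _ (min_le_right x z) V hV)

theorem SaturatedTop.eq_empty_of_interior_eq_empty (hsat : SaturatedTop τ) {x : Fin n}
    (y : Fin n) {U : Set X} (hU : (τ x).IsOpen U) (hU' : @interior X (τ y) U = ∅) : U = ∅ :=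
  not_nonempty_iff_eq_empty.mp fun hne => (hsat x y U hU hne).ne_empty hU'

theorem interior_frontier_inter_interior_eq_empty (hord : OrderedTop τ) (hsat : SaturatedTop τ)
    (x y z : Fin n) {A B : Set X} (hB : @interior X (τ y) (@frontier X (τ y) A ∩ B) = ∅) :
    @interior X (τ x) (@frontier X (τ y) A) ∩ @interior X (τ z) B = ∅ := by
  refine hsat.eq_empty_of_interior_eq_empty y
    (hord.isOpen_inter (@isOpen_interior X (τ x) _) (@isOpen_interior X (τ z) _)) ?_
  refine subset_empty_iff.mp (hB ▸ @interior_mono X (τ y) _ _ ?_)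
  exact inter_subset_inter (@interior_subset X (τ x) _) (@interior_subset X (τ z) _)

theorem interior_frontier_subset_frontier (hord : OrderedTop τ) (hsat : SaturatedTop τ)
    (x y z : Fin n) (A : Set X) :
    @interior X (τ x) (@frontier X (τ y) A) ⊆ @frontier X (τ z) A := by
  rw [@frontier_eq_inter_compl_interior X (τ z)]
  refine subset_inter ?_ ?_ <;> rw [subset_compl_iff_disjoint_right, disjoint_iff_inter_eq_empty]
  · exact interior_frontier_inter_interior_eq_empty hord hsat x y z
      (@interior_frontier_inter_self X (τ y) A)
  · exact interior_frontier_inter_interior_eq_empty hord hsat x y z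
      (@interior_frontier_inter_compl X (τ y) A)

theorem interior_frontier_subset_interior_frontier (hord : OrderedTop τ) (hsat : SaturatedTop τ)
    (x y z : Fin n) (A : Set X) :
    @interior X (τ x) (@frontier X (τ y) A) ⊆ @interior X (τ x) (@frontier X (τ z) A) :=
  @interior_maximal X (τ x) _ _ (interior_frontier_subset_frontier hord hsat x y z A)
    (@isOpen_interior X (τ x) _)

end OrderedSaturated

/-- IF Lemma: in a saturated `n`-topological space,
`iₓ(f_y A) = iₓ(f_z A)` for all indices `x, y, z` and all `A ⊆ X`. -/
theorem stmt_6 {X : Type*} {n : ℕ} (τ : Fin n → TopologicalSpace X)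
    (hord : OrderedTop τ) (hsat : SaturatedTop τ) (x y z : Fin n) (A : Set X) :
    @interior X (τ x) (@frontier X (τ y) A) = @interior X (τ x) (@frontier X (τ z) A) :=
  subset_antisymm (interior_frontier_subset_interior_frontier hord hsat x y z A)
    (interior_frontier_subset_interior_frontier hord hsat x z y A)
end
end

section
/- (FK Lemma) Let (X, τ₁, …, τₙ) be a saturated n-topological space. Then for all 1 ≤ x, y ≤ n and every subset A ⊆ X, f_x(k_y A) = f_x(k_{max(x,y)} A). -/
open Set

noncomputable section

/-! If `τ y` is finer than `τ x`, the `τ x`-closures of `k_y A` and `k_x A` coincide, and saturation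
forces the `τ x`-interior of `k_x A` into `k_y A`: otherwise removing `k_y A` from it would leave a
nonempty `τ y`-open set with a nonempty `τ x`-interior that lies in `k_x A` but misses `A`.
So the `τ x`-interiors coincide as well. -/

open Topology

section TwoTopologies

variable {X : Type*} {t s : TopologicalSpace X}

theorem closure_closure_of_le (hts : t ≤ s) (A : Set X) :
    closure[s] (closure[t] A) = closure[s] A :=
  subset_antisymm (@closure_minimal X s _ _ (closure.mono hts) (@isClosed_closure X s _))
    (@closure_mono X s _ _ (@subset_closure X t A))

theorem interior_closure_subset_closure_of_le (hts : t ≤ s)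
    (hsat : ∀ U, IsOpen[t] U → U.Nonempty → (@interior X s U).Nonempty) (A : Set X) :
    @interior X s (closure[s] A) ⊆ closure[t] A := by
  by_contra hsub
  set U := @interior X s (closure[s] A) \ closure[t] A
  have hU : IsOpen[t] U :=
    @IsOpen.sdiff X _ _ t ((@isOpen_interior X s _).mono hts) (@isClosed_closure X t A)
  obtain ⟨p, hp⟩ := hsat U hU (sdiff_nonempty.2 hsub)
  have hpA : p ∈ closure[s] A := interior_subset (@interior_subset X s U p hp).1
  obtain ⟨r, hrU, hrA⟩ := (@mem_closure_iff X s p A).1 hpA _ (@isOpen_interior X s U) hp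
  exact (@interior_subset X s U r hrU).2 (@subset_closure X t A r hrA)

theorem interior_closure_of_le (hts : t ≤ s)
    (hsat : ∀ U, IsOpen[t] U → U.Nonempty → (@interior X s U).Nonempty) (A : Set X) :
    @interior X s (closure[t] A) = @interior X s (closure[s] A) :=
  subset_antisymm (@interior_mono X s _ _ (closure.mono hts))
    (@interior_maximal X s _ _ (interior_closure_subset_closure_of_le hts hsat A) isOpen_interior)

theorem frontier_closure_of_le (hts : t ≤ s)
    (hsat : ∀ U, IsOpen[t] U → U.Nonempty → (@interior X s U).Nonempty) (A : Set X) :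
    @frontier X s (closure[t] A) = @frontier X s (closure[s] A) := by
  simp only [frontier, closure_closure_of_le hts, interior_closure_of_le hts hsat,
    @closure_closure X s]

end TwoTopologies

theorem OrderedTop.monotone {X : Type*} {n : ℕ} {τ : Fin n → TopologicalSpace X}
    (hord : OrderedTop τ) : Monotone τ :=
  fun i j hij => hord i j hij

/-- FK Lemma: in a saturated `n`-topological space,
`fₓ(k_y A) = fₓ(k_{max(x,y)} A)` for all indices `x, y` and all `A ⊆ X`. -/
theorem stmt_7 {X : Type*} {n : ℕ} (τ : Fin n → TopologicalSpace X)
    (hord : OrderedTop τ) (hsat : SaturatedTop τ) (x y : Fin n) (A : Set X) :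
    @frontier X (τ x) (@closure X (τ y) A) =
      @frontier X (τ x) (@closure X (τ (max x y)) A) := by
  rcases le_total x y with hxy | hyx
  · rw [max_eq_right hxy]
  · rw [max_eq_left hyx]
    exact frontier_closure_of_le (hord.monotone hyx) (hsat y x) A
end
end

section
/- (FI Lemma) Let (X, τ₁, …, τₙ) be a saturated n-topological space. Then for all 1 ≤ x, y ≤ n and every subset A ⊆ X, f_x(i_y A) = f_x(i_{max(x,y)} A). -/
open Set

noncomputable section

/-! For `y ≤ x` the topology `τ x` is coarser than `τ y`, so `i_x (i_y A) = i_x A`. Saturation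
makes every nonempty `τ y`-open set meet `i_x` of itself, hence the `τ y`-open set `i_y A` lies
in the `τ x`-closure of `i_x A`. So `i_y A` and `i_x A` have the same `τ x`-closure and the same
`τ x`-interior, hence the same `τ x`-frontier. -/

open Topology

local notation "interior[" t "]" => @interior _ t

section CoarserTopology

variable {X : Type*} {t s : TopologicalSpace X}

theorem interior_subset_interior_of_le (h : t ≤ s) (A : Set X) :
    interior[s] A ⊆ interior[t] A :=
  @interior_maximal X t A _ (@interior_subset X s A) ((@isOpen_interior X s A).mono h)

theorem interior_interior_of_le (h : t ≤ s) (A : Set X) :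
    interior[s] (interior[t] A) = interior[s] A :=
  subset_antisymm (@interior_mono X s _ _ (@interior_subset X t A))
    (@interior_maximal X s _ _ (interior_subset_interior_of_le h A) (@isOpen_interior X s A))

theorem closure_interior_eq_closure_of_isOpen (h : t ≤ s)
    (hsat : ∀ U, IsOpen[t] U → U.Nonempty → (interior[s] U).Nonempty)
    {V : Set X} (hV : IsOpen[t] V) : closure[s] (interior[s] V) = closure[s] V := by
  refine subset_antisymm (@closure_mono X s _ _ (@interior_subset X s V)) fun p hp => ?_
  rw [@mem_closure_iff X s]
  intro U hU hpU
  have hUV : (U ∩ V).Nonempty := (@mem_closure_iff X s p V).1 hp U hU hpU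
  have hint := hsat (U ∩ V) (@IsOpen.inter X t _ _ (hU.mono h) hV) hUV
  rwa [@interior_inter X s, hU.interior_eq] at hint

theorem frontier_interior_eq_frontier_interior_of_le (h : t ≤ s)
    (hsat : ∀ U, IsOpen[t] U → U.Nonempty → (interior[s] U).Nonempty) (A : Set X) :
    @frontier X s (interior[t] A) = @frontier X s (interior[s] A) := by
  have hint := interior_interior_of_le h A
  have hcl : closure[s] (interior[t] A) = closure[s] (interior[s] A) := by
    rw [← closure_interior_eq_closure_of_isOpen h hsat (@isOpen_interior X t A), hint]
  rw [frontier, frontier, hint, hcl, @interior_interior X s]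

end CoarserTopology

/-- FI Lemma: in a saturated `n`-topological space,
`fₓ(i_y A) = fₓ(i_{max(x,y)} A)` for all indices `x, y` and all `A ⊆ X`. -/
theorem stmt_8 {X : Type*} {n : ℕ} (τ : Fin n → TopologicalSpace X)
    (hord : OrderedTop τ) (hsat : SaturatedTop τ) (x y : Fin n) (A : Set X) :
    @frontier X (τ x) (@interior X (τ y) A) =
      @frontier X (τ x) (@interior X (τ (max x y)) A) := by
  rcases le_total x y with hxy | hyx
  · rw [max_eq_right hxy]
  · rw [max_eq_left hyx]
    exact frontier_interior_eq_frontier_interior_of_le (hord y x hyx) (hsat y x) A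
end
end

section
/- (IFK/IFI Lemma) Let (X, τ₁, …, τₙ) be a saturated n-topological space. Then for all 1 ≤ x, y, z ≤ n and every subset A ⊆ X, i_x(f_y(k_z A)) = ∅ and i_x(f_y(i_z A)) = ∅. -/
open Set

noncomputable section

/-! Let `t'` be finer than `t` and such that nonempty `t'`-open sets have nonempty
`t`-interior. If `S` is `t'`-open, a nonempty `t`-open set `V ⊆ f_t S` meets `S`, so the
`t`-interior of the `t'`-open set `V ∩ S` is a nonempty part of both `i_t S` and `f_t S`,
which is absurd; hence `i_t (f_t S) = ∅`, and also for `t'`-closed `S` since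
`f_t Sᶜ = f_t S`. Apply this with `t = τ_y`, `t' = τ_{min y z}`, and use saturation once more
to pass from `i_y` to `i_x`. -/

open Topology

theorem interior_frontier_eq_empty_of_isOpen_of_le {X : Type*} {t' : TopologicalSpace X}
    [t : TopologicalSpace X] (hle : t' ≤ t)
    (hsat : ∀ U : Set X, IsOpen[t'] U → U.Nonempty → (interior U).Nonempty)
    {S : Set X} (hS : IsOpen[t'] S) : interior (frontier S) = ∅ := by
  by_contra hne
  set V := interior (frontier S)
  have hV : IsOpen V := isOpen_interior
  have hVS : (V ∩ S).Nonempty := by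
    obtain ⟨p, hp⟩ := nonempty_iff_ne_empty.mpr hne
    exact mem_closure_iff.mp (frontier_subset_closure (interior_subset hp)) V hV hp
  obtain ⟨q, hq⟩ := hsat _ (t'.isOpen_inter _ _ (hV.mono hle) hS) hVS
  rw [interior_inter] at hq
  exact (interior_subset (interior_subset hq.1)).2 hq.2

theorem interior_frontier_eq_empty_of_isClosed_of_le {X : Type*} {t' : TopologicalSpace X}
    [t : TopologicalSpace X] (hle : t' ≤ t)
    (hsat : ∀ U : Set X, IsOpen[t'] U → U.Nonempty → (interior U).Nonempty)
    {S : Set X} (hS : IsClosed[t'] S) : interior (frontier S) = ∅ := by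
  rw [← frontier_compl]
  exact interior_frontier_eq_empty_of_isOpen_of_le hle hsat hS.isOpen_compl

theorem interior_eq_empty_of_saturated {X : Type*} {t₁ t₂ : TopologicalSpace X}
    (hsat : ∀ U : Set X, IsOpen[t₁] U → U.Nonempty → (@interior X t₂ U).Nonempty)
    {W : Set X} (hW : @interior X t₂ W = ∅) : @interior X t₁ W = ∅ := by
  by_contra hne
  obtain ⟨p, hp⟩ := hsat _ (@isOpen_interior X t₁ W) (nonempty_iff_ne_empty.mpr hne)
  exact notMem_empty p (hW.subset ((@interior_mono X t₂ _ _ (@interior_subset X t₁ W)) hp))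

/-- IFK/IFI Lemma: in a saturated `n`-topological space,
`iₓ(f_y(k_z A)) = ∅` and `iₓ(f_y(i_z A)) = ∅` for all indices and all `A ⊆ X`. -/
theorem stmt_11 {X : Type*} {n : ℕ} (τ : Fin n → TopologicalSpace X)
    (hord : OrderedTop τ) (hsat : SaturatedTop τ) (x y z : Fin n) (A : Set X) :
    @interior X (τ x) (@frontier X (τ y) (@closure X (τ z) A)) = ∅ ∧
      @interior X (τ x) (@frontier X (τ y) (@interior X (τ z) A)) = ∅ := by
  have hle_y : τ (min y z) ≤ τ y := hord.monotone (min_le_left y z)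
  have hle_z : τ (min y z) ≤ τ z := hord.monotone (min_le_right y z)
  constructor
  · refine interior_eq_empty_of_saturated (hsat x y) ?_
    refine @interior_frontier_eq_empty_of_isClosed_of_le X _ (τ y) hle_y (hsat _ y) _ ?_
    exact (@isClosed_closure X (τ z) A).mono hle_z
  · refine interior_eq_empty_of_saturated (hsat x y) ?_
    refine @interior_frontier_eq_empty_of_isOpen_of_le X _ (τ y) hle_y (hsat _ y) _ ?_
    exact (@isOpen_interior X (τ z) A).mono hle_z
end
end

section
/- (FFK/FFI/FFF Lemma) Let (X, τ₁, …, τₙ) be a saturated n-topological space. Then for all 1 ≤ x, y, z ≤ n and every subset A ⊆ X: f_x(f_y(k_z A)) = k_x(f_y(k_z A)), f_x(f_y(i_z A)) = k_x(f_y(i_z A)), and f_x(f_y(f_z A)) = k_x(f_y(f_z A)); moreover, if x ≤ y these sets equal f_y(k_z A), f_y(i_z A), and f_y(f_z A), respectively. -/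
open Set

noncomputable section

/-! If `S` is `τ_z`-closed, `f_y(S)` has empty `τ_y`-interior. Indeed `S` is closed in the finer
topology `τ_m`, `m = min y z`; a nonempty `τ_y`-open `W ⊆ f_y(S)` lies in the `τ_y`-closure of
`Sᶜ`, so `W ∩ Sᶜ` is a nonempty `τ_m`-open set, and its `τ_y`-interior, nonempty by saturation,
lies both in `W ⊆ k_y(S)` and in `i_y(Sᶜ) = X \ k_y(S)`. Saturation then makes the `τ_x`-interior
of `f_y(S)` empty too, so `f_x = k_x` on `f_y(S)`; for `τ_z`-open `S` use `f_y(S) = f_y(Sᶜ)`.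
If `x ≤ y`, the `τ_y`-closed set `f_y(S)` is `τ_x`-closed, hence equal to its `τ_x`-closure. -/

open Topology

local notation "interior[" t "]" => @interior _ t
local notation "frontier[" t "]" => @frontier _ t

theorem OrderedTop.le {X : Type*} {n : ℕ} {τ : Fin n → TopologicalSpace X} (hord : OrderedTop τ)
    {i j : Fin n} (hij : i ≤ j) : τ i ≤ τ j :=
  hord i j hij

theorem frontier_eq_closure_of_interior_eq_empty {X : Type*} {t : TopologicalSpace X}
    {S : Set X} (h : interior[t] S = ∅) : frontier[t] S = closure[t] S := by
  rw [frontier, h, sdiff_empty]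

theorem interior_frontier_eq_empty_of_le {X : Type*} {s t : TopologicalSpace X} (hst : s ≤ t)
    (hsat : ∀ U, IsOpen[s] U → U.Nonempty → (interior[t] U).Nonempty) {S : Set X}
    (hS : IsClosed[s] S) : interior[t] (frontier[t] S) = ∅ := by
  let _ : TopologicalSpace X := t
  set W := interior (frontier S)
  have hW : IsOpen W := isOpen_interior
  have hWS : W ⊆ closure S ∩ closure Sᶜ :=
    frontier_eq_closure_inter_closure (s := S) ▸ interior_subset
  by_contra hne
  obtain ⟨w, hw⟩ := nonempty_iff_ne_empty.2 hne
  have hWSc : (W ∩ Sᶜ).Nonempty := mem_closure_iff.1 (hWS hw).2 W hW hw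
  obtain ⟨v, hv⟩ := hsat _ (s.isOpen_inter _ _ (hW.mono hst) hS.isOpen_compl) hWSc
  have hv_notin : v ∉ closure S := by
    rw [← mem_compl_iff, ← interior_compl]
    exact interior_mono inter_subset_right hv
  exact hv_notin (hWS (interior_subset hv).1).1

theorem interior_frontier_frontier_eq_empty_of_isClosed {X : Type*} {n : ℕ}
    {τ : Fin n → TopologicalSpace X} (hord : OrderedTop τ) (hsat : SaturatedTop τ)
    (x y : Fin n) {z : Fin n} {S : Set X} (hS : IsClosed[τ z] S) :
    interior[τ x] (frontier[τ y] S) = ∅ := by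
  have hy : interior[τ y] (frontier[τ y] S) = ∅ :=
    interior_frontier_eq_empty_of_le (hord.le (min_le_left y z)) (hsat (min y z) y)
      (hS.mono (hord.le (min_le_right y z)))
  by_contra hne
  obtain ⟨v, hv⟩ := hsat x y _ (@isOpen_interior X (τ x) _) (nonempty_iff_ne_empty.2 hne)
  have hv' : v ∈ interior[τ y] (frontier[τ y] S) :=
    (@interior_mono X (τ y) _ _ (@interior_subset X (τ x) _)) hv
  rwa [hy] at hv'

theorem interior_frontier_frontier_eq_empty_of_isOpen {X : Type*} {n : ℕ}
    {τ : Fin n → TopologicalSpace X} (hord : OrderedTop τ) (hsat : SaturatedTop τ)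
    (x y : Fin n) {z : Fin n} {S : Set X} (hS : IsOpen[τ z] S) :
    interior[τ x] (frontier[τ y] S) = ∅ := by
  rw [← @frontier_compl X (τ y) S]
  exact interior_frontier_frontier_eq_empty_of_isClosed hord hsat x y
    (@IsOpen.isClosed_compl X (τ z) S hS)

/-- FFK/FFI/FFF Lemma: in a saturated `n`-topological space, for
all indices `x, y, z` and all `A ⊆ X`: `fₓ(f_y(k_z A)) = kₓ(f_y(k_z A))`,
`fₓ(f_y(i_z A)) = kₓ(f_y(i_z A))`, `fₓ(f_y(f_z A)) = kₓ(f_y(f_z A))`; and if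
`x ≤ y` these sets equal `f_y(k_z A)`, `f_y(i_z A)`, `f_y(f_z A)` respectively. -/
theorem stmt_12 {X : Type*} {n : ℕ} (τ : Fin n → TopologicalSpace X)
    (hord : OrderedTop τ) (hsat : SaturatedTop τ) (x y z : Fin n) (A : Set X) :
    (@frontier X (τ x) (@frontier X (τ y) (@closure X (τ z) A)) =
        @closure X (τ x) (@frontier X (τ y) (@closure X (τ z) A))) ∧
      (@frontier X (τ x) (@frontier X (τ y) (@interior X (τ z) A)) =
        @closure X (τ x) (@frontier X (τ y) (@interior X (τ z) A))) ∧
      (@frontier X (τ x) (@frontier X (τ y) (@frontier X (τ z) A)) =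
        @closure X (τ x) (@frontier X (τ y) (@frontier X (τ z) A))) ∧
      (x ≤ y →
        @frontier X (τ x) (@frontier X (τ y) (@closure X (τ z) A)) =
            @frontier X (τ y) (@closure X (τ z) A) ∧
          @frontier X (τ x) (@frontier X (τ y) (@interior X (τ z) A)) =
            @frontier X (τ y) (@interior X (τ z) A) ∧
          @frontier X (τ x) (@frontier X (τ y) (@frontier X (τ z) A)) =
            @frontier X (τ y) (@frontier X (τ z) A)) := by
  have hk := frontier_eq_closure_of_interior_eq_empty <|
    interior_frontier_frontier_eq_empty_of_isClosed hord hsat x y (@isClosed_closure X (τ z) A)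
  have hi := frontier_eq_closure_of_interior_eq_empty <|
    interior_frontier_frontier_eq_empty_of_isOpen hord hsat x y (@isOpen_interior X (τ z) A)
  have hf := frontier_eq_closure_of_interior_eq_empty <|
    interior_frontier_frontier_eq_empty_of_isClosed hord hsat x y (@isClosed_frontier X (τ z) A)
  have closure_frontier (hxy : x ≤ y) (S : Set X) :
      closure[τ x] (frontier[τ y] S) = frontier[τ y] S :=
    @IsClosed.closure_eq X (τ x) _ <| (@isClosed_frontier X (τ y) S).mono (hord.le hxy)
  exact ⟨hk, hi, hf, fun hxy =>
    ⟨hk.trans (closure_frontier hxy _), hi.trans (closure_frontier hxy _),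
      hf.trans (closure_frontier hxy _)⟩⟩
end
end

section
/- (FKFK/FKFI Lemma) Let (X, τ₁, …, τₙ) be a saturated n-topological space. Then for all 1 ≤ x, y, z, w ≤ n and every subset A ⊆ X, f_x(k_y(f_z(k_w A))) = k_{max(x,y)}(f_z(k_w A)) and f_x(k_y(f_z(i_w A))) = k_{max(x,y)}(f_z(i_w A)). -/
open Set

noncomputable section

/-!
In a saturated space, whether a set has empty interior does not depend on the topology `τ j`.
If `U` is `τ a`-open, every `τ c`-neighbourhood `o` of a point of `U` meets the interior of `U`,
because saturation applies to `o ∩ U`, which is open in the finer topology `τ (min c a)`;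
so `U ⊆ k_c (i_c U)`. Hence `f_z U = f_z (i_z U)` is the frontier of a `τ_z`-open set and has
empty interior, and the `τ_y`-closure of this `τ_z`-closed set still has empty interior. Thus
`f_x (k_y (f_z U)) = k_x (k_y (f_z U)) = k_{max x y} (f_z U)`, and the two claims are the cases
`U = (k_w A)ᶜ` (frontiers are invariant under complement) and `U = i_w A`.
-/

open Topology

local notation "interior[" t "]" => @interior _ t
local notation "frontier[" t "]" => @frontier _ t

section

variable {X : Type*} {n : ℕ} {τ : Fin n → TopologicalSpace X}

namespace OrderedTop

theorem monotone_s13 (hord : OrderedTop τ) : Monotone τ := fun i j h => hord i j h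

theorem isOpen_inter_s13 (hord : OrderedTop τ) {a b : Fin n} {U V : Set X} (hU : IsOpen[τ a] U)
    (hV : IsOpen[τ b] V) : IsOpen[τ (min a b)] (U ∩ V) :=
  @IsOpen.inter X (τ (min a b)) U V (hU.mono (hord.monotone_s13 (min_le_left a b)))
    (hV.mono (hord.monotone_s13 (min_le_right a b)))

theorem closure_closure (hord : OrderedTop τ) (x y : Fin n) (S : Set X) :
    closure[τ x] (closure[τ y] S) = closure[τ (max x y)] S := by
  rcases le_total x y with h | h
  · rw [max_eq_right h]
    exact @IsClosed.closure_eq X (τ x) _ ((@isClosed_closure X (τ y) S).mono (hord.monotone_s13 h))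
  · rw [max_eq_left h]
    let _ := τ x
    exact subset_antisymm (closure_minimal (closure.mono (hord.monotone_s13 h)) isClosed_closure)
      (closure_mono (@subset_closure X (τ y) S))

end OrderedTop

namespace SaturatedTop

theorem interior_eq_empty (hsat : SaturatedTop τ) {S : Set X} (i j : Fin n)
    (h : interior[τ i] S = ∅) : interior[τ j] S = ∅ := by
  contrapose! h
  obtain ⟨p, hp⟩ := hsat j i _ (@isOpen_interior X (τ j) S) h
  exact ⟨p, @interior_mono X (τ i) _ _ (@interior_subset X (τ j) S) p hp⟩

theorem subset_closure_interior (hsat : SaturatedTop τ) (hord : OrderedTop τ) {a : Fin n}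
    {U : Set X} (hU : IsOpen[τ a] U) (c : Fin n) : U ⊆ closure[τ c] (interior[τ c] U) := by
  let _ := τ c
  intro p hp
  refine mem_closure_iff.2 fun o ho hpo => ?_
  obtain ⟨q, hq⟩ := hsat (min c a) c (o ∩ U) (hord.isOpen_inter_s13 ho hU) ⟨p, hpo, hp⟩
  exact ⟨q, (interior_subset hq).1, interior_mono inter_subset_right hq⟩

theorem closure_interior_eq_closure (hsat : SaturatedTop τ) (hord : OrderedTop τ) {a : Fin n}
    {U : Set X} (hU : IsOpen[τ a] U) (c : Fin n) :
    closure[τ c] (interior[τ c] U) = closure[τ c] U :=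
  let _ := τ c
  subset_antisymm (closure_mono interior_subset)
    (closure_minimal (hsat.subset_closure_interior hord hU c) isClosed_closure)

theorem interior_frontier_eq_empty (hsat : SaturatedTop τ) (hord : OrderedTop τ) {a : Fin n}
    {U : Set X} (hU : IsOpen[τ a] U) (c j : Fin n) : interior[τ j] (frontier[τ c] U) = ∅ := by
  refine hsat.interior_eq_empty c j ?_
  let _ := τ c
  have hfr : frontier U = frontier (interior U) := by
    rw [frontier, frontier, hsat.closure_interior_eq_closure hord hU, interior_interior]
  rw [hfr, ← frontier_compl]
  exact interior_frontier isOpen_interior.isClosed_compl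

theorem interior_closure_eq_interior (hsat : SaturatedTop τ) (hord : OrderedTop τ) {a : Fin n}
    {S : Set X} (hS : IsClosed[τ a] S) (c : Fin n) :
    interior[τ c] (closure[τ c] S) = interior[τ c] S := by
  have h := hsat.closure_interior_eq_closure hord (@IsClosed.isOpen_compl X (τ a) S hS) c
  let _ := τ c
  rwa [interior_compl, closure_compl, closure_compl, compl_inj_iff] at h

theorem interior_closure_eq_empty (hsat : SaturatedTop τ) (hord : OrderedTop τ) {a j : Fin n}
    {S : Set X} (hS : IsClosed[τ a] S) (hint : interior[τ j] S = ∅) (x y : Fin n) :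
    interior[τ x] (closure[τ y] S) = ∅ :=
  hsat.interior_eq_empty y x <|
    (hsat.interior_closure_eq_interior hord hS y).trans (hsat.interior_eq_empty j y hint)

theorem frontier_closure_frontier (hsat : SaturatedTop τ) (hord : OrderedTop τ) {w : Fin n}
    {U : Set X} (hU : IsOpen[τ w] U) (x y z : Fin n) :
    frontier[τ x] (closure[τ y] (frontier[τ z] U)) =
      closure[τ (max x y)] (frontier[τ z] U) := by
  show closure[τ x] _ \ interior[τ x] _ = _
  rw [hsat.interior_closure_eq_empty hord (@isClosed_frontier X (τ z) U)
    (hsat.interior_frontier_eq_empty hord hU z z) x y, sdiff_empty, hord.closure_closure]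

end SaturatedTop

end

/-- FKFK/FKFI Lemma: in a saturated `n`-topological space, for all
indices `x, y, z, w` and all `A ⊆ X`:
`fₓ(k_y(f_z(k_w A))) = k_{max(x,y)}(f_z(k_w A))` and
`fₓ(k_y(f_z(i_w A))) = k_{max(x,y)}(f_z(i_w A))`. -/
theorem stmt_13 {X : Type*} {n : ℕ} (τ : Fin n → TopologicalSpace X)
    (hord : OrderedTop τ) (hsat : SaturatedTop τ) (x y z w : Fin n) (A : Set X) :
    (@frontier X (τ x) (@closure X (τ y) (@frontier X (τ z) (@closure X (τ w) A))) =
        @closure X (τ (max x y)) (@frontier X (τ z) (@closure X (τ w) A))) ∧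
      (@frontier X (τ x) (@closure X (τ y) (@frontier X (τ z) (@interior X (τ w) A))) =
        @closure X (τ (max x y)) (@frontier X (τ z) (@interior X (τ w) A))) := by
  refine ⟨?_, hsat.frontier_closure_frontier hord (@isOpen_interior X (τ w) A) x y z⟩
  rw [← @frontier_compl X (τ z)]
  exact hsat.frontier_closure_frontier hord (@isClosed_closure X (τ w) A).isOpen_compl x y z
end
end

section
/- Let (X, τ₁, τ₂) be a saturated 2-topological space (so τ₁ ⊇ τ₂). Then for every subset A ⊆ X: f₁(i₁ A) ⊆ f₁(i₂ A); f₁(k₁ A) ⊆ f₁(k₂ A); and f₁(k₂ A) ⊆ f₁(f₂ A). -/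
open Set

noncomputable section

/-!
Saturation puts every `τ₁`-open set inside the `τ₁`-closure of its `τ₂`-interior; passing to
complements, `i₁ (k₂ A) ⊆ k₁ A`. Since `τ₂ ⊆ τ₁`, the set `k₂ A` is `τ₁`-closed and `i₂ A` is
`τ₁`-open. Writing `f₁ = k₁ \ i₁`, each inclusion then reduces to comparing closures and interiors.
-/

open Topology

local notation "interior[" t "]" => @interior _ t
local notation "frontier[" t "]" => @frontier _ t

section TwoTopologies

variable {X : Type*} {t₁ t₂ : TopologicalSpace X} {s U : Set X}

def OpenHasNonemptyInterior (t₁ t₂ : TopologicalSpace X) : Prop :=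
  ∀ V : Set X, IsOpen[t₁] V → V.Nonempty → (interior[t₂] V).Nonempty

theorem Saturated2.openHasNonemptyInterior (hsat : Saturated2 t₁ t₂) :
    OpenHasNonemptyInterior t₁ t₂ :=
  fun V hV hne => (hsat V (Or.inl hV) hne).2

/- Otherwise `U \ closure[t₁] (interior[t₂] U)` would be a nonempty `t₁`-open set with empty
`t₂`-interior. -/
theorem OpenHasNonemptyInterior.subset_closure_interior (hsat : OpenHasNonemptyInterior t₁ t₂)
    (hU : IsOpen[t₁] U) : U ⊆ closure[t₁] (interior[t₂] U) := by
  have hempty : interior[t₂] (U \ closure[t₁] (interior[t₂] U)) = ∅ :=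
    subset_empty_iff.mp fun x hx =>
      (@interior_subset _ t₂ _ _ hx).2
        (@subset_closure _ t₁ _ _ (@interior_mono _ t₂ _ _ sdiff_subset _ hx))
  by_contra hU_not_sub
  exact (hsat _ (@IsOpen.sdiff _ _ _ t₁ hU (@isClosed_closure _ t₁ _))
    (sdiff_nonempty.mpr hU_not_sub)).ne_empty hempty

theorem OpenHasNonemptyInterior.interior_subset_closure_interior
    (hsat : OpenHasNonemptyInterior t₁ t₂) : interior[t₁] s ⊆ closure[t₁] (interior[t₂] s) :=
  (hsat.subset_closure_interior (@isOpen_interior _ t₁ _)).trans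
    (@closure_mono _ t₁ _ _ (@interior_mono _ t₂ _ _ (@interior_subset _ t₁ _)))

theorem OpenHasNonemptyInterior.interior_closure_subset_closure
    (hsat : OpenHasNonemptyInterior t₁ t₂) : interior[t₁] (closure[t₂] s) ⊆ closure[t₁] s := by
  have h := hsat.interior_subset_closure_interior (s := sᶜ)
  rwa [@interior_compl _ t₁, @interior_compl _ t₂, @closure_compl _ t₁, compl_subset_compl] at h

theorem OpenHasNonemptyInterior.frontier_interior_subset_frontier_interior
    (hsat : OpenHasNonemptyInterior t₁ t₂) :
    frontier[t₁] (interior[t₁] s) ⊆ frontier[t₁] (interior[t₂] s) := by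
  rw [@IsOpen.frontier_eq _ t₁ _ (@isOpen_interior _ t₁ _)]
  exact sdiff_subset_sdiff
    (@closure_minimal _ t₁ _ _ hsat.interior_subset_closure_interior (@isClosed_closure _ t₁ _))
    (@interior_mono _ t₁ _ _ (@interior_subset _ t₂ _))

theorem OpenHasNonemptyInterior.frontier_closure_subset_frontier_closure
    (hsat : OpenHasNonemptyInterior t₁ t₂) (h : t₁ ≤ t₂) :
    frontier[t₁] (closure[t₁] s) ⊆ frontier[t₁] (closure[t₂] s) :=
  sdiff_subset_sdiff (@closure_mono _ t₁ _ _ (closure.mono h))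
    (@interior_maximal _ t₁ _ _ hsat.interior_closure_subset_closure (@isOpen_interior _ t₁ _))

theorem frontier_closure_subset_frontier (h : t₁ ≤ t₂) :
    frontier[t₁] (closure[t₂] s) ⊆ frontier[t₂] s := by
  rw [@IsClosed.frontier_eq _ t₁ _ (isClosed_closure.mono h)]
  exact sdiff_subset_sdiff_right <| @interior_maximal _ t₁ _ _
    ((@interior_subset _ t₂ _).trans subset_closure) (isOpen_interior.mono h)

theorem frontier_closure_subset_frontier_frontier (h : t₁ ≤ t₂) :
    frontier[t₁] (closure[t₂] s) ⊆ frontier[t₁] (frontier[t₂] s) := fun _ hx =>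
  ⟨@subset_closure _ t₁ _ _ (frontier_closure_subset_frontier h hx),
    fun hx_int => hx.2 (@interior_mono _ t₁ _ _ (@frontier_subset_closure _ t₂ _) _ hx_int)⟩

end TwoTopologies

/-- in a saturated 2-topological space (τ₁ ⊇ τ₂), for every `A ⊆ X`:
`f₁(i₁ A) ⊆ f₁(i₂ A)`, `f₁(k₁ A) ⊆ f₁(k₂ A)`, and `f₁(k₂ A) ⊆ f₁(f₂ A)`. -/
theorem stmt_15 {X : Type*} (t1 t2 : TopologicalSpace X)
    (hord : ∀ U : Set X, t2.IsOpen U → t1.IsOpen U) (hsat : Saturated2 t1 t2)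
    (A : Set X) :
    @frontier X t1 (@interior X t1 A) ⊆ @frontier X t1 (@interior X t2 A) ∧
      @frontier X t1 (@closure X t1 A) ⊆ @frontier X t1 (@closure X t2 A) ∧
      @frontier X t1 (@closure X t2 A) ⊆ @frontier X t1 (@frontier X t2 A) :=
  ⟨hsat.openHasNonemptyInterior.frontier_interior_subset_frontier_interior,
    hsat.openHasNonemptyInterior.frontier_closure_subset_frontier_closure hord,
    frontier_closure_subset_frontier_frontier hord⟩
end
end

section
/- Let (X, τ₁, τ₂) be a saturated 2-topological space (so τ₁ ⊇ τ₂). Then for every subset A ⊆ X and any choices of indices in place of the stars (which are irrelevant by saturation): f₁(k₁(i_* A)) ⊆ f₁(i₂(k_*(i_* A))) and f₁(i₁(k_* A)) ⊆ f₁(k₂(i_*(k_* A))); explicitly, f₁(k₁(i₁ A)) ⊆ f₁(i₂(k₂(i₂ A))) and f₁(i₁(k₁ A)) ⊆ f₁(k₂(i₂(k₂ A))). -/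
open Set

noncomputable section

/-!
Saturation says that every nonempty `τ₁`-open set `U` has nonempty `s`-interior for
`s ∈ {τ₁, τ₂}`, i.e. `U ⊆ k₁ (i_s U)`. Hence `k_t (i_s A) = k_t (i₁ A)` for all
`t, s ∈ {τ₁, τ₂}`, and dually `i_t (k_s A) = i_t (k₁ A)`. This reduces the two inclusions
to `f₁ B ⊆ f₁ (i₂ B)` for `B = k₁ (i₁ A)` and `f₁ V ⊆ f₁ (k₂ V)` for `V = i₁ (k₁ A)`.
The first holds because `i₂ B ⊆ B` has the same `τ₁`-closure as `B`, the second because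
`k₂ V ⊇ V` has the same `τ₁`-interior as `V`.
-/

open Topology

local notation "interior[" t "]" => @interior _ t

local notation "frontier[" t "]" => @frontier _ t

theorem frontier_subset_frontier_of_closure_eq {X : Type*} [TopologicalSpace X] {B D : Set X}
    (hDB : D ⊆ B) (hcl : closure D = closure B) : frontier B ⊆ frontier D := by
  rw [frontier, frontier, hcl]
  exact sdiff_subset_sdiff_right (interior_mono hDB)

theorem frontier_subset_frontier_of_interior_eq {X : Type*} [TopologicalSpace X] {B E : Set X}
    (hBE : B ⊆ E) (hint : interior E = interior B) : frontier B ⊆ frontier E := by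
  rw [frontier, frontier, hint]
  exact sdiff_subset_sdiff_left (closure_mono hBE)

section TwoTopologies

variable {X : Type*} {u s t : TopologicalSpace X}

theorem interior_mono_of_le (h : u ≤ s) (A : Set X) : interior[s] A ⊆ interior[u] A :=
  @interior_maximal X u A _ (@interior_subset X s A) ((@isOpen_interior X s A).mono h)

theorem subset_closure_interior_of_nonempty_interior
    (hsat : ∀ U : Set X, IsOpen[u] U → U.Nonempty → (interior[s] U).Nonempty)
    {U : Set X} (hU : IsOpen[u] U) : U ⊆ closure[u] (interior[s] U) := by
  intro x hx
  refine (@mem_closure_iff X u x _).2 fun o ho hxo => ?_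
  obtain ⟨y, hy⟩ := hsat (o ∩ U) (@IsOpen.inter X u o U ho hU) ⟨x, hxo, hx⟩
  exact ⟨y, (@interior_subset X s _ _ hy).1, @interior_mono X s _ _ inter_subset_right _ hy⟩

theorem closure_interior_eq_of_le (hus : u ≤ s) (hut : u ≤ t)
    (hsat : ∀ U : Set X, IsOpen[u] U → U.Nonempty → (interior[s] U).Nonempty) (A : Set X) :
    closure[t] (interior[s] A) = closure[t] (interior[u] A) := by
  refine subset_antisymm (@closure_mono X t _ _ (interior_mono_of_le hus A)) ?_
  have hdense : interior[u] A ⊆ closure[t] (interior[s] A) :=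
    (subset_closure_interior_of_nonempty_interior hsat (@isOpen_interior X u A)).trans <|
      (closure.mono hut).trans <|
        @closure_mono X t _ _ (@interior_mono X s _ _ (@interior_subset X u A))
  exact @closure_minimal X t _ _ hdense (@isClosed_closure X t _)

theorem interior_closure_eq_of_le (hus : u ≤ s) (hut : u ≤ t)
    (hsat : ∀ U : Set X, IsOpen[u] U → U.Nonempty → (interior[s] U).Nonempty) (A : Set X) :
    interior[t] (closure[s] A) = interior[t] (closure[u] A) := by
  rw [@closure_eq_compl_interior_compl X s, @closure_eq_compl_interior_compl X u,
    @interior_compl X t, @interior_compl X t, closure_interior_eq_of_le hus hut hsat]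

theorem frontier_closure_interior_subset_frontier_interior (hus : u ≤ s)
    (hsat : ∀ U : Set X, IsOpen[u] U → U.Nonempty → (interior[s] U).Nonempty) (A : Set X) :
    frontier[u] (closure[u] (interior[u] A)) ⊆
      frontier[u] (interior[s] (closure[u] (interior[u] A))) := by
  refine @frontier_subset_frontier_of_closure_eq X u _ _ (@interior_subset X s _) ?_
  rw [closure_interior_eq_of_le hus le_rfl hsat, @closure_interior_idem X u, @closure_closure X u]

theorem frontier_interior_closure_subset_frontier_closure (hus : u ≤ s)
    (hsat : ∀ U : Set X, IsOpen[u] U → U.Nonempty → (interior[s] U).Nonempty) (A : Set X) :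
    frontier[u] (interior[u] (closure[u] A)) ⊆
      frontier[u] (closure[s] (interior[u] (closure[u] A))) := by
  refine @frontier_subset_frontier_of_interior_eq X u _ _ (@subset_closure X s _) ?_
  rw [interior_closure_eq_of_le hus le_rfl hsat, @interior_closure_idem X u,
    @interior_interior X u]

end TwoTopologies

/-- in a saturated 2-topological space (τ₁ ⊇ τ₂), for every `A ⊆ X`
and any choices of topologies `s1, s2, s3 ∈ {τ₁, τ₂}` in the starred positions:
`f₁(k₁(i_* A)) ⊆ f₁(i₂(k_*(i_* A)))` and `f₁(i₁(k_* A)) ⊆ f₁(k₂(i_*(k_* A)))`;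
in particular `f₁(k₁(i₁ A)) ⊆ f₁(i₂(k₂(i₂ A)))` and
`f₁(i₁(k₁ A)) ⊆ f₁(k₂(i₂(k₂ A)))`. -/
theorem stmt_16 {X : Type*} (t1 t2 : TopologicalSpace X)
    (hord : ∀ U : Set X, t2.IsOpen U → t1.IsOpen U) (hsat : Saturated2 t1 t2)
    (A : Set X) :
    (∀ s1 s2 s3 : TopologicalSpace X,
        s1 ∈ ({t1, t2} : Set (TopologicalSpace X)) →
        s2 ∈ ({t1, t2} : Set (TopologicalSpace X)) →
        s3 ∈ ({t1, t2} : Set (TopologicalSpace X)) →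
        @frontier X t1 (@closure X t1 (@interior X s1 A)) ⊆
          @frontier X t1 (@interior X t2 (@closure X s2 (@interior X s3 A)))) ∧
      (∀ s1 s2 s3 : TopologicalSpace X,
        s1 ∈ ({t1, t2} : Set (TopologicalSpace X)) →
        s2 ∈ ({t1, t2} : Set (TopologicalSpace X)) →
        s3 ∈ ({t1, t2} : Set (TopologicalSpace X)) →
        @frontier X t1 (@interior X t1 (@closure X s1 A)) ⊆
          @frontier X t1 (@closure X t2 (@interior X s2 (@closure X s3 A)))) := by
  -- `hord` is `t1 ≤ t2` itself: in Mathlib's order a finer topology is smaller.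
  have hle : ∀ s ∈ ({t1, t2} : Set (TopologicalSpace X)), t1 ≤ s := by
    rintro s (rfl | rfl)
    exacts [le_rfl, hord]
  have hdense : ∀ s ∈ ({t1, t2} : Set (TopologicalSpace X)),
      ∀ U : Set X, IsOpen[t1] U → U.Nonempty → (interior[s] U).Nonempty := by
    rintro s (rfl | rfl) U hU hne
    exacts [(hsat U (.inl hU) hne).1, (hsat U (.inl hU) hne).2]
  have ht2 : t2 ∈ ({t1, t2} : Set (TopologicalSpace X)) := by simp
  refine ⟨fun s1 s2 s3 h1 h2 h3 => ?_, fun s1 s2 s3 h1 h2 h3 => ?_⟩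
  · rw [closure_interior_eq_of_le (hle s1 h1) le_rfl (hdense s1 h1),
      closure_interior_eq_of_le (hle s3 h3) (hle s2 h2) (hdense s3 h3),
      interior_closure_eq_of_le (hle s2 h2) hord (hdense s2 h2)]
    exact frontier_closure_interior_subset_frontier_interior hord (hdense t2 ht2) A
  · rw [interior_closure_eq_of_le (hle s1 h1) le_rfl (hdense s1 h1),
      interior_closure_eq_of_le (hle s3 h3) (hle s2 h2) (hdense s3 h3),
      closure_interior_eq_of_le (hle s2 h2) hord (hdense s2 h2)]
    exact frontier_interior_closure_subset_frontier_closure hord (hdense t2 ht2) A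
end
end

section
/- Consider the real line X = ℝ equipped with τ₁ = the Sorgenfrey (lower-limit) topology, generated by the half-open intervals [a, b), and τ₂ = the usual Euclidean topology. There exists a subset A ⊆ ℝ which exhibits the natural partial order on KF₂⁰ exactly: for all operators o₁, o₂ ∈ KF₂⁰, one has o₁A ⊆ o₂A if and only if o₁B ⊆ o₂B for every subset B ⊆ ℝ. -/
open Set

noncomputable section

/-- The Sorgenfrey (lower-limit) topology on `ℝ`, generated by the half-open
intervals `[a, b)`. -/
def sorgenfrey : TopologicalSpace ℝ :=
  TopologicalSpace.generateFrom {S : Set ℝ | ∃ a b : ℝ, S = Set.Ico a b}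

/-- The usual Euclidean topology on `ℝ`. -/
def euclidean : TopologicalSpace ℝ := inferInstance

/-!
Every operator in `KF₂⁰` is local (on a Euclidean-open `U` its value depends only on the trace
of its argument on `U`, because the Sorgenfrey topology is finer) and commutes with
translations (both topologies are translation invariant). If `o₁ B ⊈ o₂ B`, locality and a
translation turn `B` into a witness `C ⊆ (-1, 1)` with `0 ∈ o₁ C \ o₂ C`. Since `KF₂⁰` is
countable, the witnesses of all pairs can be translated into the pairwise disjoint windows
`(2n - 1, 2n + 1)`; by locality, each window of their union still separates its pair.
-/

open TopologicalSpace Function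
open scoped Topology Pointwise

section Locality

variable {X : Type*}

def localOperators (t : TopologicalSpace X) : Submonoid (Function.End (Set X)) where
  carrier := {o | ∀ ⦃U B B' : Set X⦄, IsOpen[t] U → B ∩ U = B' ∩ U → o B ∩ U = o B' ∩ U}
  one_mem' _ _ _ _ h := h
  mul_mem' h₁ h₂ _ _ _ hU h := h₁ hU (h₂ hU h)

theorem localOperators_anti {t t' : TopologicalSpace X} (h : t ≤ t') :
    localOperators t ≤ localOperators t' :=
  fun _ ho _ _ _ hU => ho (TopologicalSpace.le_def.1 h _ hU)

theorem mem_apply_iff_of_inter_eq {t : TopologicalSpace X} {o : Function.End (Set X)}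
    (ho : o ∈ localOperators t) {U B B' : Set X} (hU : IsOpen[t] U) (hB : B ∩ U = B' ∩ U)
    {x : X} (hx : x ∈ U) : x ∈ o B ↔ x ∈ o B' := by
  have := congrArg (x ∈ ·) (ho hU hB)
  simpa [hx] using this

variable [t : TopologicalSpace X]

theorem closure_inter_open {U : Set X} (hU : IsOpen U) (B : Set X) :
    closure B ∩ U = closure (B ∩ U) ∩ U :=
  (subset_inter hU.closure_inter inter_subset_right).antisymm
    (inter_subset_inter_left _ (closure_mono inter_subset_left))

theorem clOp_mem_localOperators : clOp t ∈ localOperators t := fun U B B' hU h => by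
  show closure B ∩ U = closure B' ∩ U
  rw [closure_inter_open hU, closure_inter_open hU B', h]

theorem interior_inter_open {U : Set X} (hU : IsOpen U) (B : Set X) :
    interior B ∩ U = interior (B ∩ U) := by
  rw [interior_inter, hU.interior_eq]

theorem intOp_mem_localOperators : intOp t ∈ localOperators t := fun U B B' hU h => by
  show interior B ∩ U = interior B' ∩ U
  rw [interior_inter_open hU, interior_inter_open hU, h]

theorem frOp_mem_localOperators : frOp t ∈ localOperators t := fun U B B' hU h => by
  show frontier B ∩ U = frontier B' ∩ U
  rw [frontier, frontier, inter_sdiff_distrib_right, inter_sdiff_distrib_right,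
    closure_inter_open hU, closure_inter_open hU B', interior_inter_open hU,
    interior_inter_open hU, h]

end Locality

section Equivariance

def equivariantOperators (G X : Type*) [VAdd G X] : Submonoid (Function.End (Set X)) where
  carrier := {o | ∀ (g : G) (B : Set X), o (g +ᵥ B) = g +ᵥ o B}
  one_mem' _ _ := rfl
  mul_mem' {o₁ o₂} h₁ h₂ g B := show o₁ (o₂ _) = _ by rw [h₂, h₁]; rfl

theorem vadd_mem_apply_vadd_iff {G X : Type*} [AddGroup G] [AddAction G X]
    {o : Function.End (Set X)} (ho : o ∈ equivariantOperators G X) (g : G) (x : X)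
    (B : Set X) : g +ᵥ x ∈ o (g +ᵥ B) ↔ x ∈ o B := by
  rw [ho, vadd_mem_vadd_set_iff]

variable {G X : Type*} [AddGroup G] [AddAction G X] [t : TopologicalSpace X]
  [ContinuousConstVAdd G X]

theorem clOp_mem_equivariantOperators : clOp t ∈ equivariantOperators G X :=
  closure_vadd

theorem intOp_mem_equivariantOperators : intOp t ∈ equivariantOperators G X :=
  interior_vadd

theorem frOp_mem_equivariantOperators : frOp t ∈ equivariantOperators G X :=
  fun g B => ((Homeomorph.vadd g).image_frontier B).symm

end Equivariance

theorem Submonoid.countable_closure {M : Type*} [Monoid M] {s : Set M} (hs : s.Countable) :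
    (Submonoid.closure s : Set M).Countable := by
  have := hs.to_subtype
  rw [Submonoid.closure_eq_mrange, MonoidHom.coe_mrange]
  exact countable_range _

theorem sorgenfrey_le_euclidean : sorgenfrey ≤ euclidean := by
  rw [euclidean, Real.isTopologicalBasis_Ioo_rat.eq_generateFrom]
  refine le_generateFrom fun s hs => ?_
  obtain ⟨a, b, -, rfl⟩ : ∃ a b : ℚ, a < b ∧ s = Ioo (a : ℝ) b := by simpa using hs
  have : Ioo (a : ℝ) b = ⋃ x ∈ Ioo (a : ℝ) b, Ico x b := by
    ext y
    simp only [mem_Ioo, mem_iUnion, mem_Ico, exists_prop]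
    exact ⟨fun hy => ⟨y, hy, le_rfl, hy.2⟩, fun ⟨x, hx, hxy, hyb⟩ => ⟨hx.1.trans_le hxy, hyb⟩⟩
  rw [this]
  exact @isOpen_biUnion _ _ sorgenfrey _ _ fun x _ => isOpen_generateFrom_of_mem ⟨x, b, rfl⟩

theorem continuousConstVAdd_sorgenfrey : @ContinuousConstVAdd ℝ ℝ sorgenfrey _ := by
  refine @ContinuousConstVAdd.mk ℝ ℝ sorgenfrey _ fun c => ?_
  refine continuous_generateFrom_iff.2 ?_
  rintro _ ⟨a, b, rfl⟩
  rw [show (c +ᵥ · : ℝ → ℝ) = (c + ·) from rfl, preimage_const_add_Ico]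
  exact isOpen_generateFrom_of_mem ⟨a - c, b - c, rfl⟩

theorem mem_apply_iff_of_inter_Ioo_eq {o : Function.End (Set ℝ)}
    (ho : o ∈ localOperators euclidean ⊓ equivariantOperators ℝ ℝ)
    {A C : Set ℝ} {c : ℝ} (h : A ∩ Ioo (c - 1) (c + 1) = (c +ᵥ C) ∩ Ioo (c - 1) (c + 1)) :
    c ∈ o A ↔ (0 : ℝ) ∈ o C := by
  rw [mem_apply_iff_of_inter_eq (Submonoid.mem_inf.1 ho).1 (isOpen_Ioo (α := ℝ)) h
    ⟨by linarith, by linarith⟩, ← vadd_mem_apply_vadd_iff (Submonoid.mem_inf.1 ho).2 c 0 C,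
    vadd_eq_add, add_zero]

theorem vadd_subset_Ioo {C : Set ℝ} {a b : ℝ} (hC : C ⊆ Ioo a b) (c : ℝ) :
    c +ᵥ C ⊆ Ioo (c + a) (c + b) := by
  rintro _ ⟨y, hy, rfl⟩
  exact ⟨by simp [(hC hy).1], by simp [(hC hy).2]⟩

theorem exists_subset_Ioo_of_not_subset {o₁ o₂ : Function.End (Set ℝ)}
    (h₁ : o₁ ∈ localOperators euclidean ⊓ equivariantOperators ℝ ℝ)
    (h₂ : o₂ ∈ localOperators euclidean ⊓ equivariantOperators ℝ ℝ)
    {B : Set ℝ} (hB : ¬ o₁ B ⊆ o₂ B) :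
    ∃ C ⊆ Ioo (-1) 1, (0 : ℝ) ∈ o₁ C ∧ (0 : ℝ) ∉ o₂ C := by
  obtain ⟨x, hx₁, hx₂⟩ := not_subset.1 hB
  set C := -x +ᵥ (B ∩ Ioo (x - 1) (x + 1))
  have hBC : B ∩ Ioo (x - 1) (x + 1) = (x +ᵥ C) ∩ Ioo (x - 1) (x + 1) := by
    rw [vadd_neg_vadd, inter_assoc, inter_self]
  refine ⟨C, ?_, (mem_apply_iff_of_inter_Ioo_eq h₁ hBC).1 hx₁,
    fun h => hx₂ ((mem_apply_iff_of_inter_Ioo_eq h₂ hBC).2 h)⟩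
  convert vadd_subset_Ioo inter_subset_right (-x) using 2 <;> ring

theorem iUnion_vadd_inter_Ioo {ι : Type*} {n : ι → ℕ} (hn : Injective n) {C : ι → Set ℝ}
    (hC : ∀ i, C i ⊆ Ioo (-1) 1) (i : ι) :
    (⋃ j, (2 * n j : ℝ) +ᵥ C j) ∩ Ioo (2 * n i - 1) (2 * n i + 1) =
      ((2 * n i : ℝ) +ᵥ C i) ∩ Ioo (2 * n i - 1) (2 * n i + 1) := by
  refine subset_antisymm ?_ (inter_subset_inter_left _ (subset_iUnion_of_subset i subset_rfl))
  rintro y ⟨hy, hyi⟩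
  obtain ⟨j, hyj⟩ := mem_iUnion.1 hy
  have hyj' := vadd_subset_Ioo (hC j) _ hyj
  have hji : n j = n i := by
    have h₁ : (n j : ℝ) < n i + 1 := by linarith [hyj'.1, hyi.2]
    have h₂ : (n i : ℝ) < n j + 1 := by linarith [hyj'.2, hyi.1]
    have : n j < n i + 1 := by exact_mod_cast h₁
    have : n i < n j + 1 := by exact_mod_cast h₂
    omega
  obtain rfl := hn hji
  exact ⟨hyj, hyi⟩

theorem exists_set_detecting_inclusions {M : Set (Function.End (Set ℝ))} (hM : M.Countable)
    (hML : M ⊆ localOperators euclidean ⊓ equivariantOperators ℝ ℝ) :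
    ∃ A : Set ℝ, ∀ o₁ ∈ M, ∀ o₂ ∈ M, o₁ A ⊆ o₂ A → ∀ B, o₁ B ⊆ o₂ B := by
  have := (hM.prod hM).to_subtype
  obtain ⟨n, hn⟩ := Countable.exists_injective_nat ↥(M ×ˢ M)
  have : ∀ p : ↥(M ×ˢ M), ∃ C ⊆ Ioo (-1) 1,
      ∀ B, ¬ p.1.1 B ⊆ p.1.2 B → (0 : ℝ) ∈ p.1.1 C ∧ (0 : ℝ) ∉ p.1.2 C := by
    rintro ⟨⟨o₁, o₂⟩, h₁, h₂⟩
    by_cases h : ∀ B, o₁ B ⊆ o₂ B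
    · exact ⟨∅, empty_subset _, fun B hB => (hB (h B)).elim⟩
    · obtain ⟨B, hB⟩ := not_forall.1 h
      obtain ⟨C, hC, hsep⟩ := exists_subset_Ioo_of_not_subset (hML h₁) (hML h₂) hB
      exact ⟨C, hC, fun _ _ => hsep⟩
  choose C hC hsep using this
  refine ⟨⋃ p, (2 * n p : ℝ) +ᵥ C p, fun o₁ h₁ o₂ h₂ hA B => ?_⟩
  by_contra hB
  set p : ↥(M ×ˢ M) := ⟨(o₁, o₂), h₁, h₂⟩
  have hwindow := iUnion_vadd_inter_Ioo hn hC p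
  obtain ⟨h0₁, h0₂⟩ := hsep p B hB
  exact h0₂ <| (mem_apply_iff_of_inter_Ioo_eq (hML h₂) hwindow).1 <|
    hA <| (mem_apply_iff_of_inter_Ioo_eq (hML h₁) hwindow).2 h0₁

theorem KF20_sorgenfrey_euclidean_le :
    KF20 sorgenfrey euclidean ≤ localOperators euclidean ⊓ equivariantOperators ℝ ℝ := by
  unfold euclidean
  have := continuousConstVAdd_sorgenfrey
  have hloc := localOperators_anti sorgenfrey_le_euclidean
  refine Submonoid.closure_le.2 ?_
  simp only [insert_subset_iff, singleton_subset_iff, SetLike.mem_coe, Submonoid.mem_inf]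
  exact ⟨⟨hloc (clOp_mem_localOperators (t := sorgenfrey)),
      clOp_mem_equivariantOperators (t := sorgenfrey)⟩,
    ⟨hloc (intOp_mem_localOperators (t := sorgenfrey)),
      intOp_mem_equivariantOperators (t := sorgenfrey)⟩,
    ⟨hloc (frOp_mem_localOperators (t := sorgenfrey)),
      frOp_mem_equivariantOperators (t := sorgenfrey)⟩,
    ⟨clOp_mem_localOperators, clOp_mem_equivariantOperators⟩,
    ⟨intOp_mem_localOperators, intOp_mem_equivariantOperators⟩,
    ⟨frOp_mem_localOperators, frOp_mem_equivariantOperators⟩⟩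

/-- on `ℝ` with the Sorgenfrey topology `τ₁` and the usual topology
`τ₂`, there is a subset `A ⊆ ℝ` exhibiting the natural partial order on `KF₂⁰`
exactly: for all `o₁, o₂ ∈ KF₂⁰`, `o₁A ⊆ o₂A` iff `o₁B ⊆ o₂B` for every `B ⊆ ℝ`. -/
theorem stmt_19 :
    ∃ A : Set ℝ, ∀ o1 o2 : Function.End (Set ℝ),
      o1 ∈ KF20 sorgenfrey euclidean → o2 ∈ KF20 sorgenfrey euclidean →
      (o1 A ⊆ o2 A ↔ ∀ B : Set ℝ, o1 B ⊆ o2 B) := by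
  obtain ⟨A, hA⟩ := exists_set_detecting_inclusions
    (Submonoid.countable_closure (toFinite _).countable) KF20_sorgenfrey_euclidean_le
  exact ⟨A, fun o₁ o₂ h₁ h₂ => ⟨hA o₁ h₁ o₂ h₂, fun h => h A⟩⟩
end
end
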